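/- For all n ≥ 2, the identity 2 Σ_{i=n+1}^{2n} t_{i,0}(n) = Σ_{i=n+1}^{2n} Σ_{j=0}^{2n-i} t_{i,j}(n) + Σ_{i=n}^{2n-2} Σ_{j=0}^{2n-2-i} t_{i,j}(n-1) holds; i.e. twice the first-column sum of the triangle T(n) equals the total sum of T(n) plus the total sum of T(n-1). -/
import Mathlib


/-- The integers `t_{i,j}(n)`: `t_{2,0}(1) = 1`,
`t_{i,j}(n) = (i-2) t_{i-1,j}(n-1) + t_{i-1,j-1}(n-1) + (i-3) t_{i-2,j}(n-1)` for `n ≥ 2`,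
and `t_{i,j}(n) = 0` whenever `i ≤ n`, `j < 0` or `i + j > 2n`. -/
def tt : ℕ → ℤ → ℤ → ℤ
  | 0, _, _ => 0
  | 1, i, j => if i = 2 ∧ j = 0 then 1 else 0
  | n + 2, i, j =>
      if i ≤ (n : ℤ) + 2 ∨ j < 0 ∨ 2 * ((n : ℤ) + 2) < i + j then 0
      else (i - 2) * tt (n + 1) (i - 1) j + tt (n + 1) (i - 1) (j - 1)
        + (i - 3) * tt (n + 1) (i - 2) j


lemma tt_low (n : ℕ) (i j : ℤ) (h : i ≤ (n:ℤ)) : tt n i j = 0 := by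
  match n with
  | 0 => rfl
  | 1 => simp only [tt]; rw [if_neg]; rintro ⟨rfl, rfl⟩; norm_num at h
  | n + 2 => simp only [tt]; rw [if_pos]; left; push_cast at h ⊢; linarith

lemma tt_neg (n : ℕ) (i j : ℤ) (h : j < 0) : tt n i j = 0 := by
  match n with
  | 0 => rfl
  | 1 => simp only [tt]; rw [if_neg]; rintro ⟨rfl, rfl⟩; norm_num at h
  | n + 2 => simp only [tt]; rw [if_pos]; right; left; exact h

lemma tt_high (n : ℕ) (i j : ℤ) (h : 2*(n:ℤ) < i + j) : tt n i j = 0 := by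
  match n with
  | 0 => rfl
  | 1 => simp only [tt]; rw [if_neg]; rintro ⟨rfl, rfl⟩; norm_num at h
  | n + 2 => simp only [tt]; rw [if_pos]; right; right; push_cast at h ⊢; linarith

lemma tt_big (n : ℕ) (i j : ℤ) (h : 2*(n:ℤ) ≤ j) : tt n i j = 0 := by
  rcases le_or_gt i (n:ℤ) with hi | hi
  · exact tt_low n i j hi
  · exact tt_high n i j (by have : (0:ℤ) ≤ (n:ℤ) := Int.natCast_nonneg n; linarith)

lemma tt_rec (n : ℕ) (hn : 1 ≤ n) (i j : ℤ) :
    tt (n+1) i j = (i - 2) * tt n (i - 1) j + tt n (i - 1) (j - 1)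
      + (i - 3) * tt n (i - 2) j := by
  obtain ⟨m, rfl⟩ := Nat.exists_eq_add_of_le hn
  have hdef : tt (m + 2) i j =
      if i ≤ (m : ℤ) + 2 ∨ j < 0 ∨ 2 * ((m : ℤ) + 2) < i + j then 0
      else (i - 2) * tt (m + 1) (i - 1) j + tt (m + 1) (i - 1) (j - 1)
        + (i - 3) * tt (m + 1) (i - 2) j := by simp only [tt]
  rw [show 1 + m + 1 = m + 2 by ring, show 1 + m = m + 1 by ring] at *
  rw [hdef]
  split_ifs with hc
  · have hm1 : ((m:ℤ) + 1) = ((m+1 : ℕ) : ℤ) := by push_cast; ring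
    rcases hc with hc | hc | hc
    · rw [tt_low (m+1) (i-1) j (by push_cast; linarith),
        tt_low (m+1) (i-1) (j-1) (by push_cast; linarith),
        tt_low (m+1) (i-2) j (by push_cast; linarith)]; ring
    · rw [tt_neg (m+1) (i-1) j hc, tt_neg (m+1) (i-1) (j-1) (by linarith),
        tt_neg (m+1) (i-2) j hc]; ring
    · rw [tt_high (m+1) (i-1) j (by push_cast; linarith),
        tt_high (m+1) (i-1) (j-1) (by push_cast; linarith),
        tt_high (m+1) (i-2) j (by push_cast; linarith)]; ring
  · rfl

/-- row sum -/
def rr (n : ℕ) (i : ℤ) : ℤ := ∑ j ∈ Finset.range (2*n+1), tt n i (j : ℤ)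

lemma rr_low (n : ℕ) (i : ℤ) (h : i ≤ (n:ℤ)) : rr n i = 0 := by
  unfold rr; apply Finset.sum_eq_zero; intro j _; exact tt_low n i j h

lemma rr_high (n : ℕ) (i : ℤ) (h : 2*(n:ℤ) < i) : rr n i = 0 := by
  unfold rr; apply Finset.sum_eq_zero; intro j _
  exact tt_high n i j (by have : (0:ℤ) ≤ (j:ℤ) := Int.natCast_nonneg j; linarith)

lemma sum_shift1 (N : ℕ) (g : ℤ → ℤ) (h0 : g (-1) = 0) (h1 : g (N : ℤ) = 0) :
    ∑ i ∈ Finset.range (N+2), g ((i:ℤ)-1) = ∑ i ∈ Finset.range N, g (i:ℤ) := by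
  rw [Finset.sum_range_succ', Finset.sum_range_succ]
  have : ∀ i : ℕ, g (((i+1 : ℕ) : ℤ) - 1) = g (i : ℤ) := by
    intro i; congr 1; push_cast; ring
  simp only [this]
  rw [show (((0:ℕ)):ℤ) - 1 = -1 by norm_num, h0, h1]
  ring

lemma sum_shift2 (N : ℕ) (g : ℤ → ℤ) (h0 : g (-2) = 0) (h1 : g (-1) = 0) :
    ∑ i ∈ Finset.range (N+2), g ((i:ℤ)-2) = ∑ i ∈ Finset.range N, g (i:ℤ) := by
  rw [Finset.sum_range_succ', Finset.sum_range_succ']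
  have : ∀ i : ℕ, g (((i+1+1 : ℕ) : ℤ) - 2) = g (i : ℤ) := by
    intro i; congr 1; push_cast; ring
  simp only [this]
  norm_num [h0, h1]

lemma sum_trim2 (N : ℕ) (g : ℤ → ℤ) (h1 : g (N : ℤ) = 0) (h2 : g ((N:ℤ)+1) = 0) :
    ∑ i ∈ Finset.range (N+2), g (i:ℤ) = ∑ i ∈ Finset.range N, g (i:ℤ) := by
  rw [Finset.sum_range_succ, Finset.sum_range_succ]
  rw [show (((N:ℕ)+1 : ℕ):ℤ) = (N:ℤ)+1 by push_cast; ring, h1, h2]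
  ring

lemma rr_rec (n : ℕ) (hn : 1 ≤ n) (i : ℤ) :
    rr (n+1) i = (i-1) * rr n (i-1) + (i-3) * rr n (i-2) := by
  have expand : rr (n+1) i = ∑ j ∈ Finset.range (2*n+1+2),
      ((i - 2) * tt n (i - 1) (j:ℤ) + tt n (i - 1) ((j:ℤ) - 1)
        + (i - 3) * tt n (i - 2) (j:ℤ)) := by
    unfold rr
    rw [show 2*(n+1)+1 = 2*n+1+2 by ring]
    exact Finset.sum_congr rfl (fun j _ => tt_rec n hn i (j:ℤ))
  rw [expand, Finset.sum_add_distrib, Finset.sum_add_distrib]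
  have e1 : ∑ j ∈ Finset.range (2*n+1+2), (i - 2) * tt n (i - 1) (j:ℤ)
      = (i-2) * rr n (i-1) := by
    rw [← Finset.mul_sum]; congr 1
    exact sum_trim2 (2*n+1) (fun j => tt n (i-1) j)
      (tt_big n _ _ (by push_cast; linarith))
      (tt_big n _ _ (by push_cast; linarith))
  have e2 : ∑ j ∈ Finset.range (2*n+1+2), tt n (i - 1) ((j:ℤ) - 1)
      = rr n (i-1) := by
    exact sum_shift1 (2*n+1) (fun j => tt n (i-1) j)
      (tt_neg n _ _ (by norm_num))
      (tt_big n _ _ (by push_cast; linarith))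
  have e3 : ∑ j ∈ Finset.range (2*n+1+2), (i - 3) * tt n (i - 2) (j:ℤ)
      = (i-3) * rr n (i-2) := by
    rw [← Finset.mul_sum]; congr 1
    exact sum_trim2 (2*n+1) (fun j => tt n (i-2) j)
      (tt_big n _ _ (by push_cast; linarith))
      (tt_big n _ _ (by push_cast; linarith))
  rw [e1, e2, e3]; ring

lemma cc_rec (n : ℕ) (hn : 1 ≤ n) (i : ℤ) :
    tt (n+1) i 0 = (i-2) * tt n (i-1) 0 + (i-3) * tt n (i-2) 0 := by
  rw [tt_rec n hn i 0, tt_neg n (i-1) (0-1) (by norm_num)]; ring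

/-- column-0 minus row sum combination -/
def dd (n : ℕ) (i : ℤ) : ℤ := 2 * tt n i 0 - rr n i

lemma dd_low (n : ℕ) (i : ℤ) (h : i ≤ (n:ℤ)) : dd n i = 0 := by
  unfold dd; rw [tt_low n i 0 h, rr_low n i h]; ring

lemma dd_high (n : ℕ) (i : ℤ) (h : 2*(n:ℤ) < i) : dd n i = 0 := by
  unfold dd; rw [tt_high n i 0 (by linarith), rr_high n i h]; ring

lemma dd_rec (n : ℕ) (hn : 1 ≤ n) (i : ℤ) :
    dd (n+1) i = (i-2) * dd n (i-1) + (i-3) * dd n (i-2) - rr n (i-1) := by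
  unfold dd
  rw [cc_rec n hn i, rr_rec n hn i]; ring

/-- weighted total sum -/
def Hs (f : ℤ → ℤ) (n : ℕ) : ℤ := ∑ i ∈ Finset.range (2*n+1), f (i:ℤ) * rr n (i:ℤ)

/-- weighted 2·column − total sum -/
def Gs (f : ℤ → ℤ) (n : ℕ) : ℤ := ∑ i ∈ Finset.range (2*n+1), f (i:ℤ) * dd n (i:ℤ)

lemma Hs_rec (f : ℤ → ℤ) (n : ℕ) (hn : 1 ≤ n) :
    Hs f (n+1) = Hs (fun k => k * f (k+1) + (k-1) * f (k+2)) n := by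
  unfold Hs
  rw [show 2*(n+1)+1 = 2*n+1+2 by ring]
  have expand : ∀ i : ℕ, f (i:ℤ) * rr (n+1) (i:ℤ)
      = f (i:ℤ) * ((i:ℤ)-1) * rr n ((i:ℤ)-1) + f (i:ℤ) * ((i:ℤ)-3) * rr n ((i:ℤ)-2) := by
    intro i; rw [rr_rec n hn (i:ℤ)]; ring
  rw [Finset.sum_congr rfl (fun i _ => expand i), Finset.sum_add_distrib]
  have e1 : ∑ i ∈ Finset.range (2*n+1+2), f (i:ℤ) * ((i:ℤ)-1) * rr n ((i:ℤ)-1)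
      = ∑ k ∈ Finset.range (2*n+1), f ((k:ℤ)+1) * (k:ℤ) * rr n (k:ℤ) := by
    have h0 : (fun k : ℤ => f (k+1) * k * rr n k) (-1) = 0 := by
      show f (-1+1) * (-1) * rr n (-1) = 0
      rw [rr_low n (-1) (by push_cast; linarith)]; ring
    have h1 : (fun k : ℤ => f (k+1) * k * rr n k) ((2*n+1 : ℕ) : ℤ) = 0 := by
      show f _ * _ * rr n ((2*n+1 : ℕ) : ℤ) = 0
      rw [rr_high n _ (by push_cast; linarith)]; ring
    calc ∑ i ∈ Finset.range (2*n+1+2), f (i:ℤ) * ((i:ℤ)-1) * rr n ((i:ℤ)-1)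
        = ∑ i ∈ Finset.range (2*n+1+2),
            (fun k : ℤ => f (k+1) * k * rr n k) ((i:ℤ)-1) := by
          refine Finset.sum_congr rfl (fun i _ => ?_)
          show _ = f ((i:ℤ)-1+1) * ((i:ℤ)-1) * rr n ((i:ℤ)-1)
          rw [show ((i:ℤ)-1+1) = (i:ℤ) by ring]
      _ = ∑ k ∈ Finset.range (2*n+1),
            (fun k : ℤ => f (k+1) * k * rr n k) (k:ℤ) :=
          sum_shift1 (2*n+1) (fun k : ℤ => f (k+1) * k * rr n k) h0 h1
      _ = ∑ k ∈ Finset.range (2*n+1), f ((k:ℤ)+1) * (k:ℤ) * rr n (k:ℤ) := rfl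
  have e2 : ∑ i ∈ Finset.range (2*n+1+2), f (i:ℤ) * ((i:ℤ)-3) * rr n ((i:ℤ)-2)
      = ∑ k ∈ Finset.range (2*n+1), f ((k:ℤ)+2) * ((k:ℤ)-1) * rr n (k:ℤ) := by
    have h0 : (fun k : ℤ => f (k+2) * (k-1) * rr n k) (-2) = 0 := by
      show f _ * _ * rr n (-2) = 0
      rw [rr_low n (-2) (by push_cast; linarith)]; ring
    have h1 : (fun k : ℤ => f (k+2) * (k-1) * rr n k) (-1) = 0 := by
      show f _ * _ * rr n (-1) = 0
      rw [rr_low n (-1) (by push_cast; linarith)]; ring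
    calc ∑ i ∈ Finset.range (2*n+1+2), f (i:ℤ) * ((i:ℤ)-3) * rr n ((i:ℤ)-2)
        = ∑ i ∈ Finset.range (2*n+1+2),
            (fun k : ℤ => f (k+2) * (k-1) * rr n k) ((i:ℤ)-2) := by
          refine Finset.sum_congr rfl (fun i _ => ?_)
          show _ = f ((i:ℤ)-2+2) * ((i:ℤ)-2-1) * rr n ((i:ℤ)-2)
          rw [show ((i:ℤ)-2+2) = (i:ℤ) by ring, show ((i:ℤ)-2-1) = (i:ℤ)-3 by ring]
      _ = ∑ k ∈ Finset.range (2*n+1),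
            (fun k : ℤ => f (k+2) * (k-1) * rr n k) (k:ℤ) :=
          sum_shift2 (2*n+1) (fun k : ℤ => f (k+2) * (k-1) * rr n k) h0 h1
      _ = ∑ k ∈ Finset.range (2*n+1), f ((k:ℤ)+2) * ((k:ℤ)-1) * rr n (k:ℤ) := rfl
  rw [e1, e2, ← Finset.sum_add_distrib]
  refine Finset.sum_congr rfl (fun k _ => ?_)
  ring

lemma Gs_rec (f : ℤ → ℤ) (n : ℕ) (hn : 1 ≤ n) :
    Gs f (n+1) = Gs (fun k => (k-1) * (f (k+1) + f (k+2))) n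
      - Hs (fun k => f (k+1)) n := by
  unfold Gs Hs
  rw [show 2*(n+1)+1 = 2*n+1+2 by ring]
  have expand : ∀ i : ℕ, f (i:ℤ) * dd (n+1) (i:ℤ)
      = f (i:ℤ) * ((i:ℤ)-2) * dd n ((i:ℤ)-1) + f (i:ℤ) * ((i:ℤ)-3) * dd n ((i:ℤ)-2)
        - f (i:ℤ) * rr n ((i:ℤ)-1) := by
    intro i; rw [dd_rec n hn (i:ℤ)]; ring
  rw [Finset.sum_congr rfl (fun i _ => expand i)]
  rw [Finset.sum_sub_distrib, Finset.sum_add_distrib]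
  have e1 : ∑ i ∈ Finset.range (2*n+1+2), f (i:ℤ) * ((i:ℤ)-2) * dd n ((i:ℤ)-1)
      = ∑ k ∈ Finset.range (2*n+1), f ((k:ℤ)+1) * ((k:ℤ)-1) * dd n (k:ℤ) := by
    have h0 : (fun k : ℤ => f (k+1) * (k-1) * dd n k) (-1) = 0 := by
      show f _ * _ * dd n (-1) = 0
      rw [dd_low n (-1) (by push_cast; linarith)]; ring
    have h1 : (fun k : ℤ => f (k+1) * (k-1) * dd n k) ((2*n+1 : ℕ) : ℤ) = 0 := by
      show f _ * _ * dd n ((2*n+1 : ℕ) : ℤ) = 0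
      rw [dd_high n _ (by push_cast; linarith)]; ring
    calc ∑ i ∈ Finset.range (2*n+1+2), f (i:ℤ) * ((i:ℤ)-2) * dd n ((i:ℤ)-1)
        = ∑ i ∈ Finset.range (2*n+1+2),
            (fun k : ℤ => f (k+1) * (k-1) * dd n k) ((i:ℤ)-1) := by
          refine Finset.sum_congr rfl (fun i _ => ?_)
          show _ = f ((i:ℤ)-1+1) * ((i:ℤ)-1-1) * dd n ((i:ℤ)-1)
          rw [show ((i:ℤ)-1+1) = (i:ℤ) by ring, show ((i:ℤ)-1-1) = (i:ℤ)-2 by ring]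
      _ = ∑ k ∈ Finset.range (2*n+1),
            (fun k : ℤ => f (k+1) * (k-1) * dd n k) (k:ℤ) :=
          sum_shift1 (2*n+1) (fun k : ℤ => f (k+1) * (k-1) * dd n k) h0 h1
      _ = ∑ k ∈ Finset.range (2*n+1), f ((k:ℤ)+1) * ((k:ℤ)-1) * dd n (k:ℤ) := rfl
  have e2 : ∑ i ∈ Finset.range (2*n+1+2), f (i:ℤ) * ((i:ℤ)-3) * dd n ((i:ℤ)-2)
      = ∑ k ∈ Finset.range (2*n+1), f ((k:ℤ)+2) * ((k:ℤ)-1) * dd n (k:ℤ) := by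
    have h0 : (fun k : ℤ => f (k+2) * (k-1) * dd n k) (-2) = 0 := by
      show f _ * _ * dd n (-2) = 0
      rw [dd_low n (-2) (by push_cast; linarith)]; ring
    have h1 : (fun k : ℤ => f (k+2) * (k-1) * dd n k) (-1) = 0 := by
      show f _ * _ * dd n (-1) = 0
      rw [dd_low n (-1) (by push_cast; linarith)]; ring
    calc ∑ i ∈ Finset.range (2*n+1+2), f (i:ℤ) * ((i:ℤ)-3) * dd n ((i:ℤ)-2)
        = ∑ i ∈ Finset.range (2*n+1+2),
            (fun k : ℤ => f (k+2) * (k-1) * dd n k) ((i:ℤ)-2) := by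
          refine Finset.sum_congr rfl (fun i _ => ?_)
          show _ = f ((i:ℤ)-2+2) * ((i:ℤ)-2-1) * dd n ((i:ℤ)-2)
          rw [show ((i:ℤ)-2+2) = (i:ℤ) by ring, show ((i:ℤ)-2-1) = (i:ℤ)-3 by ring]
      _ = ∑ k ∈ Finset.range (2*n+1),
            (fun k : ℤ => f (k+2) * (k-1) * dd n k) (k:ℤ) :=
          sum_shift2 (2*n+1) (fun k : ℤ => f (k+2) * (k-1) * dd n k) h0 h1
      _ = ∑ k ∈ Finset.range (2*n+1), f ((k:ℤ)+2) * ((k:ℤ)-1) * dd n (k:ℤ) := rfl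
  have e3 : ∑ i ∈ Finset.range (2*n+1+2), f (i:ℤ) * rr n ((i:ℤ)-1)
      = ∑ k ∈ Finset.range (2*n+1), f ((k:ℤ)+1) * rr n (k:ℤ) := by
    have h0 : (fun k : ℤ => f (k+1) * rr n k) (-1) = 0 := by
      show f _ * rr n (-1) = 0
      rw [rr_low n (-1) (by push_cast; linarith)]; ring
    have h1 : (fun k : ℤ => f (k+1) * rr n k) ((2*n+1 : ℕ) : ℤ) = 0 := by
      show f _ * rr n ((2*n+1 : ℕ) : ℤ) = 0
      rw [rr_high n _ (by push_cast; linarith)]; ring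
    calc ∑ i ∈ Finset.range (2*n+1+2), f (i:ℤ) * rr n ((i:ℤ)-1)
        = ∑ i ∈ Finset.range (2*n+1+2),
            (fun k : ℤ => f (k+1) * rr n k) ((i:ℤ)-1) := by
          refine Finset.sum_congr rfl (fun i _ => ?_)
          show _ = f ((i:ℤ)-1+1) * rr n ((i:ℤ)-1)
          rw [show ((i:ℤ)-1+1) = (i:ℤ) by ring]
      _ = ∑ k ∈ Finset.range (2*n+1),
            (fun k : ℤ => f (k+1) * rr n k) (k:ℤ) :=
          sum_shift1 (2*n+1) (fun k : ℤ => f (k+1) * rr n k) h0 h1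
      _ = ∑ k ∈ Finset.range (2*n+1), f ((k:ℤ)+1) * rr n (k:ℤ) := rfl
  rw [e1, e2, e3, ← Finset.sum_add_distrib]
  congr 1
  refine Finset.sum_congr rfl (fun k _ => ?_)
  ring

lemma rr_one (i : ℤ) : rr 1 i = if i = 2 then 1 else 0 := by
  unfold rr
  rw [show 2*1+1 = 3 by norm_num]
  rw [Finset.sum_range_succ, Finset.sum_range_succ, Finset.sum_range_succ,
    Finset.sum_range_zero]
  simp only [tt]
  norm_num

lemma Hs_one (f : ℤ → ℤ) : Hs f 1 = f 2 := by
  unfold Hs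
  rw [show 2*1+1 = 3 by norm_num]
  rw [Finset.sum_range_succ, Finset.sum_range_succ, Finset.sum_range_succ,
    Finset.sum_range_zero]
  simp [rr_one]

lemma Gs_one (f : ℤ → ℤ) : Gs f 1 = f 2 := by
  unfold Gs dd
  rw [show 2*1+1 = 3 by norm_num]
  rw [Finset.sum_range_succ, Finset.sum_range_succ, Finset.sum_range_succ,
    Finset.sum_range_zero]
  simp only [rr_one, tt]
  norm_num

/-- weight family u -/
def uu : ℕ → ℤ → ℤ
  | 0, _ => 1
  | m+1, k => k * uu m (k+1) + (k+1) * uu m (k+2)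

/-- weight family w -/
def ww : ℕ → ℤ → ℤ
  | 0, _ => 0
  | m+1, k => uu m (k+2) + k * (ww m (k+1) + ww m (k+2))

lemma claimA (m : ℕ) (k : ℤ) : uu m (k+1) - uu m k = ww m k + ww m (k+1) := by
  induction m generalizing k with
  | zero => simp [uu, ww]
  | succ m ih =>
    have h1 := ih (k+1)
    have h2 := ih (k+2)
    simp only [uu, ww]
    rw [show (k+1+1 : ℤ) = k+2 by ring, show (k+1+2 : ℤ) = k+3 by ring] at *
    rw [show (k+2+1 : ℤ) = k+3 by ring] at *
    linear_combination k * h1 + (k+1) * h2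

/-- weight family v -/
def vv (m : ℕ) (k : ℤ) : ℤ := uu m k + (k-2) * ww m k

lemma claimB (m : ℕ) (k : ℤ) :
    vv (m+1) k = k * vv m (k+1) + (k-1) * vv m (k+2) + k * uu m (k+1) := by
  have hA := claimA m (k+1)
  simp only [vv, uu, ww]
  rw [show (k+1+1 : ℤ) = k+2 by ring] at *
  linear_combination k * hA

lemma master (n : ℕ) (hn : 1 ≤ n) :
    ∀ m, Gs (fun k => (k-1) * uu m k) n = Hs (vv m) n := by
  induction n, hn using Nat.le_induction with
  | base =>
    intro m
    rw [Gs_one, Hs_one]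
    show (2-1 : ℤ) * uu m 2 = vv m 2
    simp [vv]
  | succ n hn ih =>
    intro m
    rw [Gs_rec _ n hn]
    have g1 : Gs (fun k => (k-1) * ((fun k => (k-1) * uu m k) (k+1)
        + (fun k => (k-1) * uu m k) (k+2))) n
        = Gs (fun k => (k-1) * uu (m+1) k) n := by
      unfold Gs
      refine Finset.sum_congr rfl (fun i _ => ?_)
      congr 1
      show ((i:ℤ)-1) * (((i:ℤ)+1-1) * uu m ((i:ℤ)+1) + ((i:ℤ)+2-1) * uu m ((i:ℤ)+2))
        = ((i:ℤ)-1) * uu (m+1) (i:ℤ)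
      simp only [uu]; ring
    rw [g1, ih (m+1)]
    have g2 : Hs (fun k => (fun k => (k-1) * uu m k) (k+1)) n
        = Hs (fun k => k * uu m (k+1)) n := by
      unfold Hs
      refine Finset.sum_congr rfl (fun i _ => ?_)
      congr 1
      show ((i:ℤ)+1-1) * uu m ((i:ℤ)+1) = (i:ℤ) * uu m ((i:ℤ)+1)
      ring
    rw [g2]
    rw [Hs_rec (vv m) n hn]
    unfold Hs
    rw [← Finset.sum_sub_distrib]
    refine Finset.sum_congr rfl (fun i _ => ?_)
    have hB := claimB m (i:ℤ)
    show vv (m+1) (i:ℤ) * rr n (i:ℤ) - (i:ℤ) * uu m ((i:ℤ)+1) * rr n (i:ℤ)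
      = ((i:ℤ) * vv m ((i:ℤ)+1) + ((i:ℤ)-1) * vv m ((i:ℤ)+2)) * rr n (i:ℤ)
    rw [hB]; ring

lemma key (n : ℕ) (hn : 1 ≤ n) :
    2 * ∑ i ∈ Finset.range (2*(n+1)+1), tt (n+1) (i:ℤ) 0
      = (∑ i ∈ Finset.range (2*(n+1)+1), rr (n+1) (i:ℤ))
        + ∑ i ∈ Finset.range (2*n+1), rr n (i:ℤ) := by
  have h1 : Gs (fun _ => 1) (n+1) = Hs (fun _ => 1) n := by
    rw [Gs_rec _ n hn]
    have g1 : Gs (fun k => (k-1) * ((fun _ : ℤ => (1:ℤ)) (k+1)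
        + (fun _ : ℤ => (1:ℤ)) (k+2))) n
        = 2 * Gs (fun k => (k-1) * uu 0 k) n := by
      unfold Gs
      rw [Finset.mul_sum]
      refine Finset.sum_congr rfl (fun i _ => ?_)
      show ((i:ℤ)-1) * (1 + 1) * dd n (i:ℤ) = 2 * (((i:ℤ)-1) * uu 0 (i:ℤ) * dd n (i:ℤ))
      simp only [uu]; ring
    rw [g1, master n hn 0]
    have g2 : Hs (vv 0) n = Hs (fun _ => 1) n := by
      unfold Hs
      refine Finset.sum_congr rfl (fun i _ => ?_)
      show vv 0 (i:ℤ) * rr n (i:ℤ) = 1 * rr n (i:ℤ)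
      simp [vv, uu, ww]
    rw [g2]
    have g3 : Hs (fun k => (fun _ : ℤ => (1:ℤ)) (k+1)) n = Hs (fun _ => 1) n := rfl
    rw [g3]; ring
  have h2 : Gs (fun _ => 1) (n+1)
      = 2 * (∑ i ∈ Finset.range (2*(n+1)+1), tt (n+1) (i:ℤ) 0)
        - ∑ i ∈ Finset.range (2*(n+1)+1), rr (n+1) (i:ℤ) := by
    unfold Gs dd
    rw [Finset.mul_sum, ← Finset.sum_sub_distrib]
    refine Finset.sum_congr rfl (fun i _ => ?_)
    ring
  have h3 : Hs (fun _ => 1) n = ∑ i ∈ Finset.range (2*n+1), rr n (i:ℤ) := by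
    unfold Hs
    refine Finset.sum_congr rfl (fun i _ => ?_)
    ring
  rw [h2, h3] at h1
  linarith


/-- Twice the first-column sum of the triangle `T(n)` equals the total sum of
`T(n)` plus the total sum of `T(n-1)`:
`2 ∑_{i=n+1}^{2n} t_{i,0}(n) = ∑_{i=n+1}^{2n} ∑_{j=0}^{2n-i} t_{i,j}(n)
  + ∑_{i=n}^{2n-2} ∑_{j=0}^{2n-2-i} t_{i,j}(n-1)`. -/
theorem stmt17 (n : ℕ) (hn : 2 ≤ n) :
    2 * ∑ i ∈ Finset.Icc (n + 1) (2 * n), tt n (i : ℤ) 0 =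
      (∑ i ∈ Finset.Icc (n + 1) (2 * n),
        ∑ j ∈ Finset.range (2 * n - i + 1), tt n (i : ℤ) (j : ℤ)) +
      ∑ i ∈ Finset.Icc n (2 * n - 2),
        ∑ j ∈ Finset.range (2 * n - 2 - i + 1), tt (n - 1) (i : ℤ) (j : ℤ) := by
  obtain ⟨m, rfl⟩ : ∃ m, n = m + 1 := ⟨n - 1, by omega⟩
  have hm : 1 ≤ m := by omega
  have hkey := key m hm
  -- LHS columns
  have c1 : ∑ i ∈ Finset.Icc (m + 1 + 1) (2 * (m+1)), tt (m+1) (i : ℤ) 0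
      = ∑ i ∈ Finset.range (2*(m+1)+1), tt (m+1) (i:ℤ) 0 := by
    apply Finset.sum_subset
    · intro i hi
      rw [Finset.mem_Icc] at hi; rw [Finset.mem_range]; omega
    · intro i hi hni
      rw [Finset.mem_Icc] at hni; rw [Finset.mem_range] at hi
      exact tt_low (m+1) (i:ℤ) 0 (by push_cast; omega)
  -- first double sum
  have c2 : ∑ i ∈ Finset.Icc (m + 1 + 1) (2 * (m+1)),
        ∑ j ∈ Finset.range (2 * (m+1) - i + 1), tt (m+1) (i : ℤ) (j : ℤ)
      = ∑ i ∈ Finset.range (2*(m+1)+1), rr (m+1) (i:ℤ) := by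
    rw [← Finset.sum_subset (s₁ := Finset.Icc (m + 1 + 1) (2 * (m+1)))
      (f := fun i : ℕ => rr (m+1) (i:ℤ)) ?sub ?van]
    case sub => intro i hi; rw [Finset.mem_Icc] at hi; rw [Finset.mem_range]; omega
    case van =>
      intro i hi hni
      rw [Finset.mem_Icc] at hni; rw [Finset.mem_range] at hi
      exact rr_low (m+1) (i:ℤ) (by push_cast; omega)
    refine Finset.sum_congr rfl (fun i hi => ?_)
    rw [Finset.mem_Icc] at hi
    unfold rr
    apply Finset.sum_subset
    · intro j hj; rw [Finset.mem_range] at *; omega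
    · intro j hj hnj
      rw [Finset.mem_range] at hj hnj
      exact tt_high (m+1) (i:ℤ) (j:ℤ) (by push_cast; omega)
  -- second double sum
  have c3 : ∑ i ∈ Finset.Icc (m+1) (2 * (m+1) - 2),
        ∑ j ∈ Finset.range (2 * (m+1) - 2 - i + 1), tt (m+1-1) (i : ℤ) (j : ℤ)
      = ∑ i ∈ Finset.range (2*m+1), rr m (i:ℤ) := by
    have hm1 : m + 1 - 1 = m := by omega
    have hm2 : 2 * (m+1) - 2 = 2*m := by omega
    rw [hm1, hm2]
    rw [← Finset.sum_subset (s₁ := Finset.Icc (m+1) (2*m))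
      (f := fun i : ℕ => rr m (i:ℤ)) ?sub ?van]
    case sub => intro i hi; rw [Finset.mem_Icc] at hi; rw [Finset.mem_range]; omega
    case van =>
      intro i hi hni
      rw [Finset.mem_Icc] at hni; rw [Finset.mem_range] at hi
      exact rr_low m (i:ℤ) (by push_cast; omega)
    refine Finset.sum_congr rfl (fun i hi => ?_)
    rw [Finset.mem_Icc] at hi
    unfold rr
    apply Finset.sum_subset
    · intro j hj; rw [Finset.mem_range] at *; omega
    · intro j hj hnj
      rw [Finset.mem_range] at hj hnj
      exact tt_high m (i:ℤ) (j:ℤ) (by push_cast; omega)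
  rw [c1, c2, c3]
  exact hkey
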